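/- (Key inconsistency step in necessary condition) Let T ∈ ∂G(x̄) and L ∈ ∂S(x̄) be strong subdifferential elements, where G is arbitrary and S is arbitrary, and suppose x̄ ∈ Ω = {x ∈ C : H(x) − S(x) ∈ −D} is an ε-weak local minimal solution of (P) on a neighborhood U. Then the system F(x) − F(x̄) − T(x − x̄) + ε ∈ −int K and H(x) − H(x̄) − L(x − x̄) ∈ −int D has no solution x ∈ U ∩ C. -/

import Mathlib

/-! Adding the subgradient inequality for `L` and the feasibility of `x̄` to the second strict
inequality gives `H x - S x ∈ -int D`, so `x ∈ Ω`; adding the subgradient inequality for `T` to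
the first gives `(F - G) x - (F - G) x̄ + ε ∈ -int K`, against minimality. Both steps only use
`int K + K ⊆ int K` for a convex cone `K`. -/

open Pointwise

theorem Convex.add_subset_of_pos_smul_mem {E : Type*} [AddCommGroup E] [Module ℝ E] {K : Set E}
    (hconv : Convex ℝ K) (hcone : ∀ t : ℝ, 0 < t → ∀ y ∈ K, t • y ∈ K) : K + K ⊆ K := by
  rintro _ ⟨a, ha, b, hb, rfl⟩
  have hmid := hconv ha hb (by norm_num : (0 : ℝ) ≤ 1 / 2) (by norm_num : (0 : ℝ) ≤ 1 / 2)
    (by norm_num)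
  convert hcone 2 two_pos _ hmid using 1
  rw [smul_add, smul_smul, smul_smul]
  norm_num

section

variable {E : Type*} [AddCommGroup E] [TopologicalSpace E] [IsTopologicalAddGroup E]
  {K : Set E}

theorem add_mem_interior_of_add_subset (hK : K + K ⊆ K) {a b : E} (ha : a ∈ interior K)
    (hb : b ∈ K) : a + b ∈ interior K :=
  interior_mono hK (subset_interior_add_left (Set.add_mem_add ha hb))

theorem add_mem_neg_interior_of_add_subset (hK : K + K ⊆ K) {a b : E} (ha : a ∈ -interior K)
    (hb : b ∈ -K) : a + b ∈ -interior K := by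
  rw [Set.mem_neg, neg_add]
  exact add_mem_interior_of_add_subset hK ha hb

end

theorem stmt_12_general
    {X Y Z : Type*}
    [AddCommGroup X] [Module ℝ X] [TopologicalSpace X]
    [AddCommGroup Y] [Module ℝ Y] [TopologicalSpace Y] [IsTopologicalAddGroup Y]
    [AddCommGroup Z] [Module ℝ Z] [TopologicalSpace Z] [IsTopologicalAddGroup Z]
    (K : Set Y) (hKconv : Convex ℝ K)
    (hKcone : ∀ t : ℝ, 0 < t → ∀ y ∈ K, t • y ∈ K)
    (D : Set Z) (hDconv : Convex ℝ D)
    (hDcone : ∀ t : ℝ, 0 < t → ∀ z ∈ D, t • z ∈ D)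
    (C : Set X)
    (F G : X → Y) (H S : X → Z)
    (Ω : Set X) (hΩ : Ω = {x ∈ C | H x - S x ∈ -D})
    (ε : Y) (xbar : X) (hxbar : xbar ∈ Ω)
    (T : X →L[ℝ] Y) (hT : ∀ x : X, G x - G xbar - T (x - xbar) ∈ K)
    (L : X →L[ℝ] Z) (hL : ∀ x : X, S x - S xbar - L (x - xbar) ∈ D)
    (U : Set X)
    (hmin : ∀ x ∈ U ∩ Ω, F x - G x - (F xbar - G xbar) + ε ∉ -interior K) :
    ¬ ∃ x ∈ U ∩ C,
        F x - F xbar - T (x - xbar) + ε ∈ -interior K ∧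
        H x - H xbar - L (x - xbar) ∈ -interior D := by
  rintro ⟨x, ⟨hxU, hxC⟩, hF, hH⟩
  subst hΩ
  have hK := hKconv.add_subset_of_pos_smul_mem hKcone
  have hD := hDconv.add_subset_of_pos_smul_mem hDcone
  have hxΩ : x ∈ {x ∈ C | H x - S x ∈ -D} := by
    refine ⟨hxC, Set.neg_subset_neg.mpr interior_subset ?_⟩
    have := add_mem_neg_interior_of_add_subset hD
      (add_mem_neg_interior_of_add_subset hD hH (Set.neg_mem_neg.mpr (hL x))) hxbar.2
    convert this using 1
    abel
  apply hmin x ⟨hxU, hxΩ⟩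
  convert add_mem_neg_interior_of_add_subset hK hF (Set.neg_mem_neg.mpr (hT x)) using 1
  abel

/-- Key step in the necessary optimality condition: if `T ∈ ∂G(x̄)`,
`L ∈ ∂S(x̄)` and `x̄ ∈ Ω` is an `ε`-weak local minimal solution of `(P)` on the
neighborhood `U`, then the system `F(x) - F(x̄) - T(x - x̄) + ε ∈ -int K`,
`H(x) - H(x̄) - L(x - x̄) ∈ -int D` has no solution in `U ∩ C`. -/
theorem stmt_12
    {X Y Z : Type*}
    [AddCommGroup X] [Module ℝ X] [TopologicalSpace X] [IsTopologicalAddGroup X]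
    [ContinuousSMul ℝ X]
    [AddCommGroup Y] [Module ℝ Y] [TopologicalSpace Y] [IsTopologicalAddGroup Y]
    [ContinuousSMul ℝ Y]
    [AddCommGroup Z] [Module ℝ Z] [TopologicalSpace Z] [IsTopologicalAddGroup Z]
    [ContinuousSMul ℝ Z]
    (K : Set Y) (hKconv : Convex ℝ K)
    (hKcone : ∀ t : ℝ, 0 < t → ∀ y ∈ K, t • y ∈ K)
    (hKint : (interior K).Nonempty)
    (D : Set Z) (hDconv : Convex ℝ D)
    (hDcone : ∀ t : ℝ, 0 < t → ∀ z ∈ D, t • z ∈ D)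
    (hDint : (interior D).Nonempty)
    (C : Set X) (hC : Convex ℝ C)
    (F G : X → Y) (H S : X → Z)
    (Ω : Set X) (hΩ : Ω = {x ∈ C | H x - S x ∈ -D})
    (ε : Y) (hε : ε ∈ K) (xbar : X) (hxbar : xbar ∈ Ω)
    (T : X →L[ℝ] Y) (hT : ∀ x : X, G x - G xbar - T (x - xbar) ∈ K)
    (L : X →L[ℝ] Z) (hL : ∀ x : X, S x - S xbar - L (x - xbar) ∈ D)
    (U : Set X) (hU : U ∈ nhds xbar)
    (hmin : ∀ x ∈ U ∩ Ω, F x - G x - (F xbar - G xbar) + ε ∉ -interior K) :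
    ¬ ∃ x ∈ U ∩ C,
        F x - F xbar - T (x - xbar) + ε ∈ -interior K ∧
        H x - H xbar - L (x - xbar) ∈ -interior D :=
  stmt_12_general K hKconv hKcone D hDconv hDcone C F G H S Ω hΩ ε xbar hxbar T hT L hL U hmin
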